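/- Suppose a function f : V × V → V on a finite set V satisfies the axioms of an LCA function of some rooted tree T (i.e., f(u,v) = LCA_T(u,v) for all u,v). Then the root of T equals the unique element r ∈ V with f(r,v) = r for all v, and for each non-root u, parent(u) is the ancestor-maximal element of {f(u,w) : w ∈ V, f(u,w) ≠ u}. Hence T is determined by f. -/

import Mathlib

/-- A rooted tree on a vertex set `V`: a root, a parent function fixing the
root, such that iterating the parent function from any vertex reaches the root. -/
structure RTree (V : Type) where
  root : V
  parent : V → V
  parent_root : parent root = root
  reaches_root : ∀ v : V, ∃ n : ℕ, parent^[n] v = root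

/-- `a` is an ancestor of `v` (every vertex is an ancestor of itself). -/
def RTree.isAncestor {V : Type} (T : RTree V) (a v : V) : Prop :=
  ∃ n : ℕ, T.parent^[n] v = a

/-- `a` is the least common ancestor of `u` and `v`: it is a common ancestor,
and every common ancestor of `u` and `v` is an ancestor of `a`. -/
def RTree.IsLCA {V : Type} (T : RTree V) (a u v : V) : Prop :=
  T.isAncestor a u ∧ T.isAncestor a v ∧
    ∀ b : V, T.isAncestor b u → T.isAncestor b v → T.isAncestor b a


/-! The ancestor relation of a tree is recovered from its LCA function `f` as
`a ≼ v ↔ f a v = a`, and it is a partial order because the only cycle of the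
parent map is the loop at the root. The root is the top of this order, and
`parent u` is the least strict ancestor of `u`: every strict ancestor of `u` is an
ancestor of `parent u`. So any two trees with LCA function `f` coincide. -/

namespace RTree

variable {V : Type} (T : RTree V)

lemma iterate_parent_root (n : ℕ) : T.parent^[n] T.root = T.root :=
  Function.iterate_fixed T.parent_root n

lemma eq_root_of_iterate_parent_eq_self {v : V} {k : ℕ} (hk : k ≠ 0)
    (h : T.parent^[k] v = v) : v = T.root := by
  obtain ⟨N, hN⟩ := T.reaches_root v
  have hle : N ≤ k * N := Nat.le_mul_of_pos_left N (Nat.pos_of_ne_zero hk)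
  calc v = T.parent^[k * N] v := (Function.IsPeriodicPt.mul_const h N).eq.symm
    _ = T.parent^[k * N - N] (T.parent^[N] v) := by
        rw [← Function.iterate_add_apply, Nat.sub_add_cancel hle]
    _ = T.root := by rw [hN, iterate_parent_root]

lemma isAncestor_refl (v : V) : T.isAncestor v v := ⟨0, rfl⟩

lemma isAncestor_parent (v : V) : T.isAncestor (T.parent v) v := ⟨1, rfl⟩

lemma isAncestor_root (v : V) : T.isAncestor T.root v := T.reaches_root v

lemma isAncestor_antisymm {a b : V} (hab : T.isAncestor a b) (hba : T.isAncestor b a) :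
    a = b := by
  obtain ⟨n, hn⟩ := hab
  obtain ⟨m, hm⟩ := hba
  rcases Nat.eq_zero_or_pos n with rfl | hpos
  · exact hn.symm
  · have ha : T.parent^[n + m] a = a := by rw [Function.iterate_add_apply, hm, hn]
    have hb : T.parent^[m + n] b = b := by rw [Function.iterate_add_apply, hn, hm]
    rw [T.eq_root_of_iterate_parent_eq_self (by omega) ha,
      T.eq_root_of_iterate_parent_eq_self (by omega) hb]

lemma eq_root_of_root_isAncestor {r : V} (h : T.isAncestor r T.root) : r = T.root :=
  T.isAncestor_antisymm h (T.isAncestor_root r)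

lemma parent_ne_self {u : V} (hu : u ≠ T.root) : T.parent u ≠ u := fun h =>
  hu <| T.eq_root_of_iterate_parent_eq_self one_ne_zero h

lemma isAncestor_parent_of_isAncestor_of_ne {a u : V} (h : T.isAncestor a u) (hne : a ≠ u) :
    T.isAncestor a (T.parent u) := by
  obtain ⟨_ | m, hm⟩ := h
  · exact absurd hm.symm hne
  · exact ⟨m, hm⟩

variable {T} in
lemma IsLCA.unique {a b u v : V} (ha : T.IsLCA a u v) (hb : T.IsLCA b u v) : a = b :=
  T.isAncestor_antisymm (hb.2.2 a ha.1 ha.2.1) (ha.2.2 b hb.1 hb.2.1)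

lemma isLCA_self_iff {a v : V} : T.IsLCA a a v ↔ T.isAncestor a v :=
  ⟨fun h => h.2.1, fun h => ⟨T.isAncestor_refl a, h, fun _ hb _ => hb⟩⟩

lemma isAncestor_iff_lca_eq {f : V → V → V} (hf : ∀ u v, T.IsLCA (f u v) u v) {a v : V} :
    T.isAncestor a v ↔ f a v = a :=
  ⟨fun h => (hf a v).unique (T.isLCA_self_iff.mpr h), fun h => h ▸ (hf a v).2.1⟩

lemma eq_of_isAncestor_iff (T' : RTree V) (h : ∀ a v, T'.isAncestor a v ↔ T.isAncestor a v) :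
    T'.root = T.root ∧ T'.parent = T.parent := by
  have hroot : T'.root = T.root :=
    T.eq_root_of_root_isAncestor ((h _ _).mp (T'.isAncestor_root T.root))
  refine ⟨hroot, funext fun u => ?_⟩
  by_cases hu : u = T.root
  · rw [hu, ← hroot, T'.parent_root, hroot, T.parent_root]
  · have hu' : u ≠ T'.root := hroot ▸ hu
    have h₁ : T.isAncestor (T'.parent u) (T.parent u) :=
      T.isAncestor_parent_of_isAncestor_of_ne ((h _ _).mp (T'.isAncestor_parent u))
        (T'.parent_ne_self hu')
    have h₂ : T'.isAncestor (T.parent u) (T'.parent u) :=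
      T'.isAncestor_parent_of_isAncestor_of_ne ((h _ _).mpr (T.isAncestor_parent u))
        (T.parent_ne_self hu)
    exact T.isAncestor_antisymm h₁ ((h _ _).mp h₂)

end RTree

theorem tree_determined_by_lca_general {V : Type} (T : RTree V)
    (f : V → V → V) (hf : ∀ u v : V, T.IsLCA (f u v) u v) :
    ((∀ v : V, f T.root v = T.root) ∧
        ∀ r : V, (∀ v : V, f r v = r) → r = T.root) ∧
      (∀ u : V, u ≠ T.root →
        (∃ w : V, f u w = T.parent u ∧ f u w ≠ u) ∧
          ∀ x : V, (∃ w : V, f u w = x ∧ x ≠ u) →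
            T.isAncestor x (T.parent u)) ∧
      ∀ T' : RTree V, (∀ u v : V, T'.IsLCA (f u v) u v) →
        T'.root = T.root ∧ T'.parent = T.parent := by
  have hanc : ∀ {a v : V}, T.isAncestor a v ↔ f a v = a := T.isAncestor_iff_lca_eq hf
  refine ⟨⟨fun v => hanc.mp (T.isAncestor_root v),
      fun r hr => T.eq_root_of_root_isAncestor (hanc.mpr (hr T.root))⟩, ?_, ?_⟩
  · intro u hu
    have hpar : f u (T.parent u) = T.parent u :=
      (hf u _).unique ⟨T.isAncestor_parent u, T.isAncestor_refl _, fun _ _ hb => hb⟩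
    refine ⟨⟨T.parent u, hpar, by rw [hpar]; exact T.parent_ne_self hu⟩, ?_⟩
    rintro x ⟨w, rfl, hne⟩
    exact T.isAncestor_parent_of_isAncestor_of_ne (hf u w).1 hne
  · intro T' hf'
    exact T.eq_of_isAncestor_iff T' fun a v => (T'.isAncestor_iff_lca_eq hf').trans hanc.symm

/-- If `f` is the LCA function of a rooted tree `T`, then the root of `T` is
the unique element `r` with `f r v = r` for all `v`, and for each non-root
`u`, `parent u` is the ancestor-maximal element of
`{f u w : w ∈ V, f u w ≠ u}`.  Hence `T` is determined by `f`. -/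
theorem tree_determined_by_lca {V : Type} [Fintype V] (T : RTree V)
    (f : V → V → V) (hf : ∀ u v : V, T.IsLCA (f u v) u v) :
    ((∀ v : V, f T.root v = T.root) ∧
        ∀ r : V, (∀ v : V, f r v = r) → r = T.root) ∧
      (∀ u : V, u ≠ T.root →
        (∃ w : V, f u w = T.parent u ∧ f u w ≠ u) ∧
          ∀ x : V, (∃ w : V, f u w = x ∧ x ≠ u) →
            T.isAncestor x (T.parent u)) ∧
      ∀ T' : RTree V, (∀ u v : V, T'.IsLCA (f u v) u v) →
        T'.root = T.root ∧ T'.parent = T.parent :=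
  tree_determined_by_lca_general T f hf
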